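/- Lower bound on optimal fragility: consider the problem min{ k ≥ 0 : E_P[ℓ(B,φ,y)] + R(B) ≤ τ + k·D(P,P̂) for all admissible P, B ∈ 𝓑 }. Suppose there exist ε₁, ε₂ > 0 such that τ ≤ inf_{B∈𝓑} sup_{P : D(P,P̂) ≤ ε₂} E_P[ℓ(B,φ,y)] − ε₁. Then any feasible (k, B) satisfies k ≥ ε₁/ε₂, and in particular the optimal k* ≥ ε₁/ε₂ > 0. -/
import Mathlib


/-- Lower bound on the optimal fragility: under the nontriviality condition on τ
(there exist ε₁, ε₂ > 0 with τ + ε₁ bounded by the robust loss within distance ε₂),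
any feasible (k, B) of the robust satisficing problem satisfies k ≥ ε₁/ε₂ > 0. -/
theorem fragility_lower_bound
    {Dist : Type*} {Bt : Type*}
    (expLoss : Bt → Dist → ℝ)   -- E_P[ℓ(B, φ, y)]
    (R : Bt → ℝ) (hR : ∀ B, 0 ≤ R B)
    (Dd : Dist → ℝ) (hDd : ∀ P, 0 ≤ Dd P)   -- distance D(P, P̂)
    (𝓑 : Set Bt) (τ ε₁ ε₂ : ℝ) (hε₁ : 0 < ε₁) (hε₂ : 0 < ε₂)
    (hτ : ∀ B ∈ 𝓑, ∃ P : Dist, Dd P ≤ ε₂ ∧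
      (∀ Q : Dist, Dd Q ≤ ε₂ → expLoss B Q ≤ expLoss B P) ∧
      τ + ε₁ ≤ expLoss B P) :
    ∀ k : ℝ, 0 ≤ k → ∀ B ∈ 𝓑,
      (∀ P : Dist, expLoss B P + R B ≤ τ + k * Dd P) →
      ε₁ / ε₂ ≤ k := by
  intro k hk B hB hfeas
  obtain ⟨P, hP, _, hle⟩ := hτ B hB
  have h1 : τ + ε₁ ≤ τ + k * ε₂ := by
    calc τ + ε₁ ≤ expLoss B P := hle
    _ ≤ expLoss B P + R B := by linarith [hR B]
    _ ≤ τ + k * Dd P := hfeas P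
    _ ≤ τ + k * ε₂ := by nlinarith
  rw [div_le_iff₀ hε₂]
  linarith
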